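/- arXiv:0705.1522 — 6 statements merged into one kernel-verified Lean document; each statement's English description precedes it below -/
import Mathlib

section
/- Let V be a real inner product space, J : V → V a map, and ω an alternating real bilinear form on V such that ω(v, Jv) = ‖v‖² for all v ∈ V and |ω(v,u)| ≤ ‖v‖·‖u‖ for all v, u ∈ V. Let W ⊆ V be a linear subspace such that for every nonzero v ∈ W there exists v' ∈ W with ‖Jv − v'‖ < ‖v‖. Then the restriction of ω to W is nondegenerate: for every nonzero v ∈ W there exists w ∈ W with ω(v,w) ≠ 0. -/
/-- If `ω` is an alternating bilinear form on a real inner product space taming `J`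
(`ω v (J v) = ‖v‖²`, `|ω v u| ≤ ‖v‖‖u‖`), and `W` is a subspace whose vectors are
"close to complex" (`∀ 0 ≠ v ∈ W, ∃ v' ∈ W, ‖J v - v'‖ < ‖v‖`), then `ω` restricted
to `W` is nondegenerate. -/
theorem stmt_1 (V : Type*) [NormedAddCommGroup V] [InnerProductSpace ℝ V]
    (J : V → V) (ω : V →ₗ[ℝ] V →ₗ[ℝ] ℝ)
    (hAlt : ∀ v : V, ω v v = 0)
    (h1 : ∀ v : V, ω v (J v) = ‖v‖ ^ 2)
    (h2 : ∀ v u : V, |ω v u| ≤ ‖v‖ * ‖u‖)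
    (W : Submodule ℝ V)
    (hW : ∀ v ∈ W, v ≠ 0 → ∃ v' ∈ W, ‖J v - v'‖ < ‖v‖) :
    ∀ v ∈ W, v ≠ 0 → ∃ w ∈ W, ω v w ≠ 0 := by
  intro v hv hv0
  obtain ⟨v', hv'W, hv'⟩ := hW v hv hv0
  refine ⟨v', hv'W, ?_⟩
  have hsplit : ω v v' = ω v (J v) - ω v (J v - v') := by
    rw [map_sub]; ring
  have hbound : |ω v (J v - v')| ≤ ‖v‖ * ‖J v - v'‖ := h2 v _
  have hnorm : 0 < ‖v‖ := norm_pos_iff.mpr hv0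
  have : ω v (J v - v') < ‖v‖ ^ 2 := by
    calc ω v (J v - v') ≤ |ω v (J v - v')| := le_abs_self _
      _ ≤ ‖v‖ * ‖J v - v'‖ := hbound
      _ < ‖v‖ * ‖v‖ := by exact mul_lt_mul_of_pos_left hv' hnorm
      _ = ‖v‖ ^ 2 := (sq ‖v‖).symm
  have : 0 < ω v v' := by rw [hsplit, h1]; linarith
  linarith
end

section
/- Let n ≥ 1 and let ζ ∈ ℂ be a primitive n-th root of unity. Consider the ℂ-algebra automorphism g of the polynomial ring ℂ[u,v] determined by g(u) = ζ·u and g(v) = ζ⁻¹·v. Then the subalgebra of g-invariant polynomials {f ∈ ℂ[u,v] : g(f) = f} equals the ℂ-subalgebra generated by uⁿ, vⁿ, and u·v. -/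
open MvPolynomial

/-- The invariant ring of the `Aₙ₋₁` Kleinian singularity: for `ζ` a primitive `n`-th
root of unity and `g` the automorphism of `ℂ[u,v]` with `g u = ζ u`, `g v = ζ⁻¹ v`,
the invariant polynomials are exactly the subalgebra generated by `uⁿ, vⁿ, uv`. -/
theorem stmt_4 (n : ℕ) (hn : 1 ≤ n) (ζ : ℂ) (hζ : IsPrimitiveRoot ζ n)
    (g : MvPolynomial (Fin 2) ℂ →ₐ[ℂ] MvPolynomial (Fin 2) ℂ)
    (hg : g = aeval ![C ζ * X 0, C ζ⁻¹ * X 1]) :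
    {f : MvPolynomial (Fin 2) ℂ | g f = f} =
      (Algebra.adjoin ℂ ({X 0 ^ n, X 1 ^ n, X 0 * X 1} :
        Set (MvPolynomial (Fin 2) ℂ)) : Set (MvPolynomial (Fin 2) ℂ)) := by
  have hn0 : n ≠ 0 := by omega
  have hζn : ζ ^ n = 1 := hζ.pow_eq_one
  have hζ0 : ζ ≠ 0 := by
    intro h; rw [h, zero_pow hn0] at hζn; exact zero_ne_one hζn
  set A := Algebra.adjoin ℂ ({X 0 ^ n, X 1 ^ n, X 0 * X 1} :
      Set (MvPolynomial (Fin 2) ℂ)) with hA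
  have hmon : ∀ (d : Fin 2 →₀ ℕ) (c : ℂ),
      g (monomial d c) = C (ζ ^ (d 0) * ζ⁻¹ ^ (d 1)) * monomial d c := by
    intro d c
    rw [hg, aeval_monomial, monomial_eq]
    rw [Finsupp.prod_fintype _ _ (by intro i; exact pow_zero _),
        Finsupp.prod_fintype _ _ (by intro i; exact pow_zero _)]
    rw [Fin.prod_univ_two, Fin.prod_univ_two]
    simp only [Matrix.cons_val_zero, Matrix.cons_val_one, Matrix.head_cons,
      mul_pow, map_pow, map_mul, algebraMap_eq]
    ring
  have hco : ∀ (f : MvPolynomial (Fin 2) ℂ) (e : Fin 2 →₀ ℕ),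
      coeff e (g f) = ζ ^ (e 0) * ζ⁻¹ ^ (e 1) * coeff e f := by
    intro f e
    conv_lhs => rw [f.as_sum]
    rw [map_sum, Finset.sum_congr rfl (fun d _ => hmon d (coeff d f))]
    rw [coeff_sum]
    simp only [coeff_C_mul, coeff_monomial, mul_ite, mul_zero]
    rw [Finset.sum_ite_eq' f.support e (fun d => ζ ^ (d 0) * ζ⁻¹ ^ (d 1) * coeff d f)]
    by_cases he : e ∈ f.support
    · rw [if_pos he]
    · rw [if_neg he, notMem_support_iff.1 he, mul_zero]
  ext f
  simp only [Set.mem_setOf_eq, SetLike.mem_coe]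
  constructor
  · intro hf
    -- each monomial of f has n ∣ d0 - d1
    have hsup : ∀ d ∈ f.support, ((n : ℤ)) ∣ (d 0 : ℤ) - (d 1 : ℤ) := by
      intro d hd
      have h1 : ζ ^ (d 0) * ζ⁻¹ ^ (d 1) * coeff d f = coeff d f := by
        rw [← hco, hf]
      have hc : coeff d f ≠ 0 := mem_support_iff.1 hd
      have h2 : ζ ^ (d 0) * ζ⁻¹ ^ (d 1) = 1 :=
        mul_right_cancel₀ hc (h1.trans (one_mul (coeff d f)).symm)
      have h3 : ζ ^ ((d 0 : ℤ) - (d 1 : ℤ)) = 1 := by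
        rw [inv_pow, ← div_eq_mul_inv] at h2
        rw [zpow_sub₀ hζ0, zpow_natCast, zpow_natCast]
        exact h2
      exact (hζ.zpow_eq_one_iff_dvd _).1 h3
    have hmm : ∀ d ∈ f.support, monomial d (coeff d f) ∈ A := by
      intro d hd
      have hdvd := hsup d hd
      have hmeq : monomial d (coeff d f) = C (coeff d f) * (X 0 ^ (d 0) * X 1 ^ (d 1)) := by
        rw [monomial_eq, Finsupp.prod_fintype _ _ (by intro i; exact pow_zero _),
          Fin.prod_univ_two]
      have hCmem : C (coeff d f) ∈ A := by
        rw [← algebraMap_eq]; exact Subalgebra.algebraMap_mem _ _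
      have hX0 : (X 0 ^ n : MvPolynomial (Fin 2) ℂ) ∈ A :=
        Algebra.subset_adjoin (by simp)
      have hX1 : (X 1 ^ n : MvPolynomial (Fin 2) ℂ) ∈ A :=
        Algebra.subset_adjoin (by simp)
      have hXX : (X 0 * X 1 : MvPolynomial (Fin 2) ℂ) ∈ A :=
        Algebra.subset_adjoin (by simp)
      rcases le_total (d 1) (d 0) with h | h
      · obtain ⟨k, hk⟩ : n ∣ d 0 - d 1 := by
          have : (n : ℤ) ∣ ((d 0 - d 1 : ℕ) : ℤ) := by
            rwa [Int.ofNat_sub h]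
          exact_mod_cast this
        have hx : (X 0 ^ (d 0) * X 1 ^ (d 1) : MvPolynomial (Fin 2) ℂ)
            = (X 0 * X 1) ^ (d 1) * (X 0 ^ n) ^ k := by
          rw [mul_pow, ← pow_mul, mul_assoc, mul_comm ((X 1 :
            MvPolynomial (Fin 2) ℂ) ^ d 1), ← mul_assoc, ← pow_add]
          congr 2
          omega
        rw [hmeq, hx]
        exact A.mul_mem hCmem (A.mul_mem (A.pow_mem hXX _) (A.pow_mem hX0 _))
      · obtain ⟨k, hk⟩ : n ∣ d 1 - d 0 := by
          have : (n : ℤ) ∣ ((d 1 - d 0 : ℕ) : ℤ) := by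
            rw [Int.ofNat_sub h, ← neg_sub]
            exact dvd_neg.2 hdvd
          exact_mod_cast this
        have hx : (X 0 ^ (d 0) * X 1 ^ (d 1) : MvPolynomial (Fin 2) ℂ)
            = (X 0 * X 1) ^ (d 0) * (X 1 ^ n) ^ k := by
          rw [mul_pow, ← pow_mul, mul_assoc, ← pow_add]
          congr 2
          omega
        rw [hmeq, hx]
        exact A.mul_mem hCmem (A.mul_mem (A.pow_mem hXX _) (A.pow_mem hX1 _))
    have hsum := A.sum_mem hmm
    rwa [← f.as_sum] at hsum
  · intro hf
    induction hf using Algebra.adjoin_induction with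
    | mem x hx =>
      rcases hx with rfl | rfl | rfl
      · rw [hg, map_pow, aeval_X]
        simp only [Matrix.cons_val_zero]
        rw [mul_pow, ← C_pow, hζn, C_1, one_mul]
      · rw [hg, map_pow, aeval_X]
        simp only [Matrix.cons_val_one, Matrix.head_cons, Matrix.cons_val_zero]
        rw [mul_pow, ← C_pow, inv_pow, hζn, inv_one, C_1, one_mul]
      · rw [hg, map_mul, aeval_X, aeval_X]
        simp only [Matrix.cons_val_zero, Matrix.cons_val_one, Matrix.head_cons]
        rw [mul_mul_mul_comm, ← C_mul, mul_inv_cancel₀ hζ0, C_1, one_mul]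
    | algebraMap r => rw [AlgHom.commutes]
    | add x y _ _ hx hy => rw [map_add, hx, hy]
    | mul x y _ _ hx hy => rw [map_mul, hx, hy]
end

section
/- Let n ≥ 7 be an integer not divisible by 3, and let a = (5 4 1)(2 6) and c = (1 2 3)(4 5 6 ⋯ n) in the symmetric group S_n. Then there is no automorphism ψ of S_n with ψ(a) = a⁻¹ and ψ(c) = c⁻¹. -/
private lemma stmt9_amaster (n : ℕ) (hn : 7 ≤ n) (a : Equiv.Perm (Fin n))
    (ha : a = List.formPerm [(⟨4, by linarith⟩ : Fin n), ⟨3, by linarith⟩, ⟨0, by linarith⟩] *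
      Equiv.swap (⟨1, by linarith⟩ : Fin n) ⟨5, by linarith⟩) :
    ∀ (k : ℕ) (hk : k < n), a ⟨k, hk⟩ =
      (⟨if k = 4 then 3 else if k = 3 then 0 else if k = 0 then 4
        else if k = 1 then 5 else if k = 5 then 1 else k, by split_ifs <;> omega⟩ : Fin n) := by
  intro k hk
  rw [ha]
  simp only [List.formPerm_cons_cons, List.formPerm_singleton, mul_one,
    Equiv.Perm.mul_apply, Equiv.swap_apply_def, Fin.mk.injEq]
  split_ifs <;> simp_all <;> omega

private lemma stmt9_fmaster (n : ℕ) (hn : 7 ≤ n) :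
    ∀ (k : ℕ) (hk : k < n),
      List.formPerm [(⟨0, by linarith⟩ : Fin n), ⟨1, by linarith⟩, ⟨2, by linarith⟩] ⟨k, hk⟩ =
      (⟨if k = 0 then 1 else if k = 1 then 2 else if k = 2 then 0 else k,
        by split_ifs <;> omega⟩ : Fin n) := by
  intro k hk
  simp only [List.formPerm_cons_cons, List.formPerm_singleton, mul_one,
    Equiv.Perm.mul_apply, Equiv.swap_apply_def, Fin.mk.injEq]
  split_ifs <;> simp_all <;> omega

private lemma stmt9_cmaster (n : ℕ) (hn : 7 ≤ n) (c : Equiv.Perm (Fin n))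
    (hc : c = List.formPerm [(⟨0, by linarith⟩ : Fin n), ⟨1, by linarith⟩, ⟨2, by linarith⟩] *
      List.formPerm ((List.finRange n).drop 3)) :
    ∀ (k : ℕ) (hk : k < n), c ⟨k, hk⟩ =
      (⟨if k = 0 then 1 else if k = 1 then 2 else if k = 2 then 0
        else if k = n - 1 then 3 else k + 1, by split_ifs <;> omega⟩ : Fin n) := by
  set L := (List.finRange n).drop 3 with hL
  have hnd : L.Nodup := (List.nodup_finRange n).sublist (List.drop_sublist 3 _)
  have hlen : L.length = n - 3 := by simp [hL]
  have hget : ∀ (i : ℕ) (h : i < n - 3), L[i]'(by omega) = (⟨3 + i, by omega⟩ : Fin n) := by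
    intro i h; simp [hL]
  have hgmid : ∀ (k : ℕ) (h3 : 3 ≤ k) (hk : k + 1 < n) (p : k < n),
      L.formPerm ⟨k, p⟩ = (⟨k + 1, hk⟩ : Fin n) := by
    intro k h3 hk p
    have h1 : k - 3 < L.length := by omega
    have e1 : (⟨k, p⟩ : Fin n) = L[k - 3] := by
      rw [hget (k - 3) (by omega)]; simp only [Fin.mk.injEq]; omega
    rw [e1, List.formPerm_apply_getElem _ hnd _ h1]
    have e2 : (k - 3 + 1) % L.length = k - 2 := by
      rw [hlen, Nat.mod_eq_of_lt (by omega)]; omega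
    simp only [e2]
    rw [hget (k - 2) (by omega)]; simp only [Fin.mk.injEq]; omega
  have hglast : ∀ (p : n - 1 < n), L.formPerm ⟨n - 1, p⟩ = (⟨3, by omega⟩ : Fin n) := by
    intro p
    have h1 : n - 4 < L.length := by omega
    have e1 : (⟨n - 1, p⟩ : Fin n) = L[n - 4] := by
      rw [hget (n - 4) (by omega)]; simp only [Fin.mk.injEq]; omega
    rw [e1, List.formPerm_apply_getElem _ hnd _ h1]
    have e2 : (n - 4 + 1) % L.length = 0 := by
      rw [hlen, show n - 4 + 1 = n - 3 by omega, Nat.mod_self]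
    simp only [e2]
    rw [hget 0 (by omega)]
  have hgfix : ∀ (k : ℕ) (hk : k < 3) (p : k < n), L.formPerm ⟨k, p⟩ = (⟨k, p⟩ : Fin n) := by
    intro k hk p
    apply List.formPerm_apply_of_notMem
    intro hmem
    obtain ⟨i, hi, hval⟩ := List.getElem_of_mem hmem
    rw [hlen] at hi
    rw [hget i hi] at hval
    have := congrArg Fin.val hval
    simp at this; omega
  intro k hk
  rw [hc]
  simp only [Equiv.Perm.mul_apply, ← hL]
  by_cases h0 : k < 3
  · rw [hgfix k h0 hk, stmt9_fmaster n hn k hk]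
    simp only [Fin.mk.injEq]
    split_ifs <;> omega
  · by_cases hlast : k = n - 1
    · subst hlast
      rw [hglast hk, stmt9_fmaster n hn 3 (by omega)]
      simp only [Fin.mk.injEq]
      split_ifs <;> first | exact (‹False›).elim | omega
    · rw [hgmid k (by omega) (by omega) hk, stmt9_fmaster n hn (k + 1) (by omega)]
      simp only [Fin.mk.injEq]
      split_ifs <;> first | exact (‹False›).elim | omega

/-- For `n ≥ 7` not divisible by `3`, with `a = (5 4 1)(2 6)` and
`c = (1 2 3)(4 5 ⋯ n)` in `Sₙ`, there is no automorphism `ψ` of `Sₙ` with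
`ψ a = a⁻¹` and `ψ c = c⁻¹`. -/
theorem stmt_9 (n : ℕ) (hn : 7 ≤ n) (h3 : ¬ (3 ∣ n))
    (a c : Equiv.Perm (Fin n))
    (ha : a = List.formPerm [(⟨4, by omega⟩ : Fin n), ⟨3, by omega⟩, ⟨0, by omega⟩] *
      Equiv.swap (⟨1, by omega⟩ : Fin n) ⟨5, by omega⟩)
    (hc : c = List.formPerm [(⟨0, by omega⟩ : Fin n), ⟨1, by omega⟩, ⟨2, by omega⟩] *
      List.formPerm ((List.finRange n).drop 3)) :
    ¬ ∃ ψ : Equiv.Perm (Fin n) ≃* Equiv.Perm (Fin n), ψ a = a⁻¹ ∧ ψ c = c⁻¹ := by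
  rintro ⟨ψ, hψa, hψc⟩
  clear h3
  have ha' := stmt9_amaster n hn a ha
  have hc' := stmt9_cmaster n hn c hc
  clear ha hc
  have aval : ∀ (v k : ℕ) (hv : v < n) (hk : k < n),
      (if v = 4 then 3 else if v = 3 then 0 else if v = 0 then 4
        else if v = 1 then 5 else if v = 5 then 1 else v) = k →
      a⁻¹ ⟨k, hk⟩ = ⟨v, hv⟩ := by
    intro v k hv hk hvk
    have e : a ⟨v, hv⟩ = ⟨k, hk⟩ := by
      rw [ha']; simp only [Fin.mk.injEq]; exact hvk
    rw [← e, Equiv.Perm.coe_inv, Equiv.symm_apply_apply]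
  have hai : ∀ (k : ℕ) (hk : k < n), a⁻¹ ⟨k, hk⟩ =
      (⟨if k = 3 then 4 else if k = 0 then 3 else if k = 4 then 0
        else if k = 5 then 1 else if k = 1 then 5 else k, by split_ifs <;> omega⟩ : Fin n) := by
    intro k hk
    by_cases k3 : k = 3
    · subst k3; exact aval 4 3 (by omega) hk (by norm_num)
    by_cases k0 : k = 0
    · subst k0; exact aval 3 0 (by omega) hk (by norm_num)
    by_cases k4 : k = 4
    · subst k4; exact aval 0 4 (by omega) hk (by norm_num)
    by_cases k5 : k = 5
    · subst k5; exact aval 1 5 (by omega) hk (by norm_num)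
    by_cases k1 : k = 1
    · subst k1; exact aval 5 1 (by omega) hk (by norm_num)
    · simp only [k3, k0, k4, k5, k1, if_false]
      exact aval k k hk hk (by split_ifs <;> omega)
  have cval : ∀ (v k : ℕ) (hv : v < n) (hk : k < n),
      (if v = 0 then 1 else if v = 1 then 2 else if v = 2 then 0
        else if v = n - 1 then 3 else v + 1) = k →
      c⁻¹ ⟨k, hk⟩ = ⟨v, hv⟩ := by
    intro v k hv hk hvk
    have e : c ⟨v, hv⟩ = ⟨k, hk⟩ := by
      rw [hc']; simp only [Fin.mk.injEq]; exact hvk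
    rw [← e, Equiv.Perm.coe_inv, Equiv.symm_apply_apply]
  have hci : ∀ (k : ℕ) (hk : k < n), c⁻¹ ⟨k, hk⟩ =
      (⟨if k = 1 then 0 else if k = 2 then 1 else if k = 0 then 2
        else if k = 3 then n - 1 else k - 1, by split_ifs <;> omega⟩ : Fin n) := by
    intro k hk
    by_cases k1 : k = 1
    · subst k1; exact cval 0 1 (by omega) hk (by norm_num)
    by_cases k2 : k = 2
    · subst k2; exact cval 1 2 (by omega) hk (by norm_num)
    by_cases k0 : k = 0
    · subst k0; exact cval 2 0 (by omega) hk (by split_ifs <;> first | exact (‹False›).elim | omega)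
    by_cases k3 : k = 3
    · subst k3; exact cval (n - 1) 3 (by omega) hk (by split_ifs <;> first | exact (‹False›).elim | omega)
    · simp only [k1, k2, k0, k3, if_false]
      exact cval (k - 1) k (by omega) hk
        (by split_ifs <;> first | exact (‹False›).elim | omega)
  -- useful disequalities
  have e0 : ¬((0:ℕ) = n - 1) := by omega
  have e1 : ¬((1:ℕ) = n - 1) := by omega
  have e2 : ¬((2:ℕ) = n - 1) := by omega
  have e3 : ¬((3:ℕ) = n - 1) := by omega
  have e4 : ¬((4:ℕ) = n - 1) := by omega
  have e5 : ¬((5:ℕ) = n - 1) := by omega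
  have f0 : ¬(n - 1 = 0) := by omega
  have f1 : ¬(n - 1 = 1) := by omega
  have f2 : ¬(n - 1 = 2) := by omega
  have f3 : ¬(n - 1 = 3) := by omega
  have f4 : ¬(n - 1 = 4) := by omega
  have f5 : ¬(n - 1 = 5) := by omega
  -- values of s = a*c*a*a*c⁻¹
  have S0 : ∀ (p : (0:ℕ) < n), (a*c*a*a*c⁻¹) ⟨0, p⟩ = (⟨4, by omega⟩ : Fin n) := by
    intro p
    simp [Equiv.Perm.mul_apply, ha', hc', hci, e0, e1, e2, e3, e4, e5]
  have S1 : ∀ (p : (1:ℕ) < n), (a*c*a*a*c⁻¹) ⟨1, p⟩ = (⟨3, by omega⟩ : Fin n) := by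
    intro p
    simp [Equiv.Perm.mul_apply, ha', hc', hci, e0, e1, e2, e3, e4, e5]
  have S2 : ∀ (p : (2:ℕ) < n), (a*c*a*a*c⁻¹) ⟨2, p⟩ = (⟨2, p⟩ : Fin n) := by
    intro p
    simp [Equiv.Perm.mul_apply, ha', hc', hci, e0, e1, e2, e3, e4, e5]
  have S3 : ∀ (p : (3:ℕ) < n), (a*c*a*a*c⁻¹) ⟨3, p⟩ = (⟨0, by omega⟩ : Fin n) := by
    intro p
    simp [Equiv.Perm.mul_apply, ha', hc', hci, e0, e1, e2, e3, e4, e5,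
      f0, f1, f2, f3, f4, f5]
  have S4 : ∀ (p : (4:ℕ) < n), (a*c*a*a*c⁻¹) ⟨4, p⟩ = (⟨1, by omega⟩ : Fin n) := by
    intro p
    simp [Equiv.Perm.mul_apply, ha', hc', hci, e0, e1, e2, e3, e4, e5]
  have S5 : ∀ (p : (5:ℕ) < n), (a*c*a*a*c⁻¹) ⟨5, p⟩ = (⟨5, p⟩ : Fin n) := by
    intro p
    simp [Equiv.Perm.mul_apply, ha', hc', hci, e0, e1, e2, e3, e4, e5]
  have S6 : ∀ (p : (6:ℕ) < n), (a*c*a*a*c⁻¹) ⟨6, p⟩ = (⟨6, p⟩ : Fin n) := by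
    intro p
    by_cases h7 : n = 7
    · subst h7
      norm_num [Equiv.Perm.mul_apply, ha', hc', hci]
    · have h6' : ¬((6:ℕ) = n - 1) := by omega
      simp [Equiv.Perm.mul_apply, ha', hc', hci, e0, e1, e2, e3, e4, e5, h6']
  have Sbig : ∀ (v : ℕ) (h7 : 7 ≤ v) (p : v < n),
      (a*c*a*a*c⁻¹) ⟨v, p⟩ = (⟨v, p⟩ : Fin n) := by
    intro v h7 p
    have g0 : ¬(v = 0) := by omega
    have g1 : ¬(v = 1) := by omega
    have g2 : ¬(v = 2) := by omega
    have g3 : ¬(v = 3) := by omega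
    have g4 : ¬(v = 4) := by omega
    have g5 : ¬(v = 5) := by omega
    have m0 : ¬(v - 1 = 0) := by omega
    have m1 : ¬(v - 1 = 1) := by omega
    have m2 : ¬(v - 1 = 2) := by omega
    have m3 : ¬(v - 1 = 3) := by omega
    have m4 : ¬(v - 1 = 4) := by omega
    have m5 : ¬(v - 1 = 5) := by omega
    have mn : ¬(v - 1 = n - 1) := by omega
    have mv : v - 1 + 1 = v := by omega
    simp [Equiv.Perm.mul_apply, ha', hc', hci, g0, g1, g2, g3, g4, g5,
      m0, m1, m2, m3, m4, m5, mn, mv]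
  -- the key relation (a c a a c⁻¹)⁴ = 1
  set s := a*c*a*a*c⁻¹ with hs
  have key : s * (s * (s * s)) = 1 := by
    apply Equiv.ext
    rintro ⟨v, hv⟩
    simp only [Equiv.Perm.mul_apply, Equiv.Perm.one_apply]
    by_cases h6 : v ≤ 6
    · interval_cases v
      · rw [S0, S4, S1, S3]
      · rw [S1, S3, S0, S4]
      · rw [S2, S2, S2, S2]
      · rw [S3, S0, S4, S1]
      · rw [S4, S1, S3, S0]
      · rw [S5, S5, S5, S5]
      · rw [S6, S6, S6, S6]
    · rw [Sbig v (by omega) hv, Sbig v (by omega) hv, Sbig v (by omega) hv,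
        Sbig v (by omega) hv]
  -- values of t = a⁻¹*c⁻¹*a⁻¹*a⁻¹*c
  have T0 : ∀ (p : (0:ℕ) < n), (a⁻¹*c⁻¹*a⁻¹*a⁻¹*c) ⟨0, p⟩ = (⟨3, by omega⟩ : Fin n) := by
    intro p
    simp [Equiv.Perm.mul_apply, hai, hc', hci, e0, e1, e2, e3, e4, e5]
  have T3 : ∀ (p : (3:ℕ) < n), (a⁻¹*c⁻¹*a⁻¹*a⁻¹*c) ⟨3, p⟩ = (⟨n - 1, by omega⟩ : Fin n) := by
    intro p
    simp [Equiv.Perm.mul_apply, hai, hc', hci, e0, e1, e2, e3, e4, e5,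
      f0, f1, f2, f3, f4, f5]
  have TL : ∀ (p : n - 1 < n), (a⁻¹*c⁻¹*a⁻¹*a⁻¹*c) ⟨n - 1, p⟩ = (⟨2, by omega⟩ : Fin n) := by
    intro p
    simp [Equiv.Perm.mul_apply, hai, hc', hci, e0, e1, e2, e3, e4, e5,
      f0, f1, f2, f3, f4, f5]
  have T2 : ∀ (p : (2:ℕ) < n), (a⁻¹*c⁻¹*a⁻¹*a⁻¹*c) ⟨2, p⟩ = (⟨4, by omega⟩ : Fin n) := by
    intro p
    simp [Equiv.Perm.mul_apply, hai, hc', hci, e0, e1, e2, e3, e4, e5]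
  -- transport the relation through ψ
  set t := a⁻¹*c⁻¹*a⁻¹*a⁻¹*c with ht
  have hmap : ψ s = t := by
    rw [hs, ht]
    simp only [map_mul, map_inv, hψa, hψc, inv_inv]
  have h1 : t * (t * (t * t)) = 1 := by
    rw [← hmap, ← map_mul, ← map_mul, ← map_mul, key, map_one]
  have h2 := DFunLike.congr_fun h1 (⟨0, by omega⟩ : Fin n)
  simp only [Equiv.Perm.mul_apply, Equiv.Perm.one_apply] at h2
  rw [T0, T3, TL, T2] at h2
  have h4 := congrArg Fin.val h2
  norm_num at h4
end

section
/- Let G be a group, let φ be an element of the center of G, and let τ ∈ G. Consider tuples in G^m and the Hurwitz equivalence relation ≅ generated by the Hurwitz moves σᵢ and their inverses. Let F = (τ₁, …, τ_m) be a tuple with τ₁τ₂⋯τ_m = φ. If there exists a tuple F' = (f₂, …, f_m) ∈ G^{m−1} such that F ≅ (τ, f₂, …, f_m), then the simultaneously conjugated tuple F_τ := (τ⁻¹τ₁τ, τ⁻¹τ₂τ, …, τ⁻¹τ_mτ) satisfies F_τ ≅ F. -/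
/-- The Hurwitz move `σᵢ` on `m`-tuples in a group `G` (indices `0`-based). -/
def hurwitzMove {G : Type*} [Group G] {m : ℕ} (i : ℕ) (g : Fin m → G) : Fin m → G :=
  fun j =>
    if h : i + 1 < m then
      if (j : ℕ) = i then g ⟨i + 1, h⟩
      else if (j : ℕ) = i + 1 then (g ⟨i + 1, h⟩)⁻¹ * g ⟨i, by omega⟩ * g ⟨i + 1, h⟩
      else g j
    else g j

/-- One Hurwitz move relates two tuples. -/
def hurwitzStep {G : Type*} [Group G] {m : ℕ} (x y : Fin m → G) : Prop :=
  ∃ i : ℕ, i + 1 < m ∧ y = hurwitzMove i x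

section AurouxAux

variable {G : Type*} [Group G] {m : ℕ}

/-- Hurwitz moves commute with simultaneous conjugation. -/
lemma hurwitzMove_conj (c : G) (i : ℕ) (x : Fin m → G) :
    hurwitzMove i (fun j => c⁻¹ * x j * c) = fun j => c⁻¹ * hurwitzMove i x j * c := by
  funext j
  unfold hurwitzMove
  by_cases h : i + 1 < m
  · simp only [dif_pos h]
    by_cases h1 : (j : ℕ) = i
    · simp [h1]
    · by_cases h2 : (j : ℕ) = i + 1
      · simp only [if_neg h1, if_pos h2]; group
      · simp [h1, h2]
  · simp [h]

/-- Hurwitz equivalence is preserved by simultaneous conjugation. -/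
lemma eqvGen_conj (c : G) {x y : Fin m → G} (h : Relation.EqvGen hurwitzStep x y) :
    Relation.EqvGen hurwitzStep (fun j => c⁻¹ * x j * c) (fun j => c⁻¹ * y j * c) := by
  induction h with
  | rel a b hab =>
      obtain ⟨i, hi, rfl⟩ := hab
      exact Relation.EqvGen.rel _ _ ⟨i, hi, (hurwitzMove_conj c i a).symm⟩
  | refl a => exact Relation.EqvGen.refl _
  | symm a b _ ih => exact Relation.EqvGen.symm _ _ ih
  | trans a b d _ _ ih1 ih2 => exact Relation.EqvGen.trans _ _ _ ih1 ih2

/-- A Hurwitz move preserves the product of the entries. -/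
lemma prod_ofFn_hurwitzMove (i : ℕ) (x : Fin m → G) :
    (List.ofFn (hurwitzMove i x)).prod = (List.ofFn x).prod := by
  by_cases h : i + 1 < m
  · have key : ∀ y : Fin m → G, (List.ofFn y).prod =
        ((List.ofFn y).take i).prod * (y ⟨i, by omega⟩ * (y ⟨i + 1, h⟩ *
          ((List.ofFn y).drop (i + 2)).prod)) := by
      intro y
      rw [← List.prod_take_mul_prod_drop (List.ofFn y) i,
        List.drop_eq_getElem_cons (by simp; omega),
        List.drop_eq_getElem_cons (by simp; omega)]
      simp [mul_assoc]
    rw [key x, key (hurwitzMove i x)]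
    have htake : (List.ofFn (hurwitzMove i x)).take i = (List.ofFn x).take i := by
      apply List.ext_getElem (by simp)
      intro n h1 h2
      simp only [List.getElem_take, List.getElem_ofFn]
      have hn : n < i := by simp at h1; omega
      unfold hurwitzMove
      rw [dif_pos h, if_neg (by simp; omega), if_neg (by simp; omega)]
    have hdrop : (List.ofFn (hurwitzMove i x)).drop (i + 2) = (List.ofFn x).drop (i + 2) := by
      apply List.ext_getElem (by simp)
      intro n h1 h2
      simp only [List.getElem_drop, List.getElem_ofFn]
      unfold hurwitzMove
      rw [dif_pos h, if_neg (by simp; omega), if_neg (by simp; omega)]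
    rw [htake, hdrop]
    have e1 : hurwitzMove i x ⟨i, by omega⟩ = x ⟨i + 1, h⟩ := by
      unfold hurwitzMove; rw [dif_pos h, if_pos (by simp)]
    have e2 : hurwitzMove i x ⟨i + 1, h⟩ =
        (x ⟨i + 1, h⟩)⁻¹ * x ⟨i, by omega⟩ * x ⟨i + 1, h⟩ := by
      unfold hurwitzMove; rw [dif_pos h, if_neg (by simp), if_pos (by simp)]
    rw [e1, e2]
    group
  · have : hurwitzMove i x = x := by
      funext j; unfold hurwitzMove; rw [dif_neg h]
    rw [this]

/-- Hurwitz equivalence preserves the product of the entries. -/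
lemma prod_eqv {x y : Fin m → G} (h : Relation.EqvGen hurwitzStep x y) :
    (List.ofFn y).prod = (List.ofFn x).prod := by
  induction h with
  | rel a b hab => obtain ⟨i, hi, rfl⟩ := hab; exact prod_ofFn_hurwitzMove i a
  | refl a => rfl
  | symm a b _ ih => exact ih.symm
  | trans a b d _ _ ih1 ih2 => exact ih2.trans ih1

/-- Moving the first entry of a tuple step by step to the right:
after `k` moves the first `k` entries have shifted left and position `k`
holds the conjugate of the original first entry by the product of the first
`k + 1` entries. -/
lemma cyc_aux (x : Fin m → G) :
    ∀ k, ∀ hk : k < m, Relation.EqvGen hurwitzStep x (fun j =>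
      if _h : (j : ℕ) < k then x ⟨(j : ℕ) + 1, by omega⟩
      else if (j : ℕ) = k then
        (((List.ofFn x).take (k + 1)).prod)⁻¹ * x ⟨0, by omega⟩ *
          ((List.ofFn x).take (k + 1)).prod
      else x j) := by
  intro k
  induction k with
  | zero =>
      intro hk
      have : (fun j : Fin m =>
          if _h : (j : ℕ) < 0 then x ⟨(j : ℕ) + 1, by omega⟩
          else if (j : ℕ) = 0 then
            (((List.ofFn x).take 1).prod)⁻¹ * x ⟨0, by omega⟩ * ((List.ofFn x).take 1).prod
          else x j) = x := by
        funext j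
        have hp : ((List.ofFn x).take 1).prod = x ⟨0, hk⟩ := by
          have h0 : (0 : ℕ) < (List.ofFn x).length := by simp; omega
          rw [show (1 : ℕ) = 0 + 1 from rfl, List.prod_take_succ _ 0 h0]
          simp
        split_ifs with h1 h2
        · omega
        · rw [hp]
          have : j = ⟨0, hk⟩ := Fin.ext h2
          rw [this]; group
        · rfl
      rw [this]
      exact Relation.EqvGen.refl x
  | succ k ih =>
      intro hk
      have hk' : k < m := by omega
      refine Relation.EqvGen.trans _ _ _ (ih hk') (Relation.EqvGen.rel _ _ ⟨k, hk, ?_⟩)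
      have hp : ((List.ofFn x).take (k + 1 + 1)).prod
          = ((List.ofFn x).take (k + 1)).prod * x ⟨k + 1, hk⟩ := by
        have h0 : k + 1 < (List.ofFn x).length := by simp; omega
        rw [List.prod_take_succ _ (k + 1) h0]
        simp
      funext j
      simp only [hurwitzMove, dif_pos hk, Fin.val_mk]
      split_ifs
      all_goals first
        | rfl
        | (exfalso; omega)
        | (exact congrArg x (Fin.mk_eq_mk.mpr (by omega)))
        | (rw [hp]; group)

/-- Moving the last entry of a tuple step by step to the left: after
`m - 1` moves the last entry is in front and all other entries are shifted
right and conjugated by it. -/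
lemma anticyc_aux (x : Fin m → G) (hm1 : 1 ≤ m) :
    ∀ t, t ≤ m - 1 → Relation.EqvGen hurwitzStep x (fun j =>
      if (j : ℕ) < m - 1 - t then x j
      else if (j : ℕ) = m - 1 - t then x ⟨m - 1, by omega⟩
      else (x ⟨m - 1, by omega⟩)⁻¹ * x ⟨(j : ℕ) - 1, by omega⟩ * x ⟨m - 1, by omega⟩) := by
  intro t
  induction t with
  | zero =>
      intro _
      have : (fun j : Fin m =>
          if (j : ℕ) < m - 1 - 0 then x j
          else if (j : ℕ) = m - 1 - 0 then x ⟨m - 1, by omega⟩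
          else (x ⟨m - 1, by omega⟩)⁻¹ * x ⟨(j : ℕ) - 1, by omega⟩ * x ⟨m - 1, by omega⟩)
          = x := by
        funext j
        split_ifs
        all_goals first
          | rfl
          | (exfalso; omega)
          | (exact congrArg x (Fin.ext (by simp only [Fin.val_mk]; omega)))
      rw [this]
      exact Relation.EqvGen.refl x
  | succ t ih =>
      intro ht
      refine Relation.EqvGen.trans _ _ _ (ih (by omega))
        (Relation.EqvGen.rel _ _ ⟨m - 2 - t, by omega, ?_⟩)
      funext j
      simp only [hurwitzMove, dif_pos (show m - 2 - t + 1 < m by omega), Fin.val_mk]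
      split_ifs
      all_goals first
        | rfl
        | (exfalso; omega)
        | (exact congrArg x (Fin.ext (by simp only [Fin.val_mk]; omega)))
        | (exact congrArg x (Fin.mk_eq_mk.mpr (by omega)))
        | (exact congrArg (fun z => (x ⟨m - 1, by omega⟩)⁻¹ * x z * x ⟨m - 1, by omega⟩)
            (Fin.mk_eq_mk.mpr (by omega)))

end AurouxAux

/-- Auroux's lemma: if `F` is a factorization of a central element `φ`, and `F` is
Hurwitz equivalent to a factorization starting with `τ`, then the simultaneous
conjugate `F_τ` is Hurwitz equivalent to `F`. -/
theorem stmt_14 (G : Type*) [Group G] (m : ℕ) (hm : 1 ≤ m) (φ τ : G)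
    (hφ : φ ∈ Subgroup.center G) (F : Fin m → G)
    (hprod : (List.ofFn F).prod = φ)
    (h : ∃ F'' : Fin m → G, F'' ⟨0, hm⟩ = τ ∧ Relation.EqvGen hurwitzStep F F'') :
    Relation.EqvGen hurwitzStep (fun j => τ⁻¹ * F j * τ) F := by
  obtain ⟨x, hx0, hFx⟩ := h
  have hprodx : (List.ofFn x).prod = φ := (prod_eqv hFx).trans hprod
  have hcomm : ∀ g : G, g * φ = φ * g := fun g => (Subgroup.mem_center_iff.mp hφ g)
  -- the cycled tuple `y = (x₁, …, x_{m-1}, τ)`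
  set y : Fin m → G := fun j =>
    if h : (j : ℕ) + 1 < m then x ⟨(j : ℕ) + 1, h⟩ else τ with hy_def
  -- Step 1 : `x ≅ y`
  have hxy : Relation.EqvGen hurwitzStep x y := by
    have hA := cyc_aux x (m - 1) (by omega)
    have : (fun j : Fin m =>
        if _h : (j : ℕ) < m - 1 then x ⟨(j : ℕ) + 1, by omega⟩
        else if (j : ℕ) = m - 1 then
          (((List.ofFn x).take (m - 1 + 1)).prod)⁻¹ * x ⟨0, by omega⟩ *
            ((List.ofFn x).take (m - 1 + 1)).prod
        else x j) = y := by
      have htake : (List.ofFn x).take (m - 1 + 1) = List.ofFn x := by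
        apply List.take_of_length_le
        simp
        omega
      funext j
      rw [hy_def]
      simp only [htake, hprodx]
      by_cases h1 : (j : ℕ) < m - 1
      · rw [dif_pos h1, dif_pos (by omega)]
      · rw [dif_neg h1, if_pos (by omega), dif_neg (by omega), ← hx0]
        have h2 : x ⟨0, hm⟩ = τ := hx0
        rw [hx0]
        have := hcomm τ
        rw [mul_assoc, this, ← mul_assoc, inv_mul_cancel, one_mul]
    rw [this] at hA
    exact hA
  -- `y`'s last entry is `τ`
  have hylast : y ⟨m - 1, by omega⟩ = τ := by
    simp only [hy_def]
    rw [dif_neg (by omega)]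
  -- Step 2 : `y ≅ z` where `z = conjugate of x by τ`
  have hyz := anticyc_aux y hm (m - 1) le_rfl
  have hz : (fun j : Fin m =>
      if (j : ℕ) < m - 1 - (m - 1) then y j
      else if (j : ℕ) = m - 1 - (m - 1) then y ⟨m - 1, by omega⟩
      else (y ⟨m - 1, by omega⟩)⁻¹ * y ⟨(j : ℕ) - 1, by omega⟩ * y ⟨m - 1, by omega⟩)
      = fun j => τ⁻¹ * x j * τ := by
    funext j
    rw [if_neg (by omega)]
    by_cases h1 : (j : ℕ) = m - 1 - (m - 1)
    · rw [if_pos h1, hylast]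
      have hj : j = ⟨0, hm⟩ := Fin.ext (by (try simp only [Fin.val_mk]); omega)
      rw [hj, hx0]
      group
    · rw [if_neg h1, hylast]
      have hjy : y ⟨(j : ℕ) - 1, by omega⟩ = x j := by
        simp only [hy_def]
        rw [dif_pos (by (try simp only [Fin.val_mk]); omega)]
        exact congrArg x (Fin.ext (by (try simp only [Fin.val_mk]); omega))
      rw [hjy]
  rw [hz] at hyz
  -- Step 3 : put everything together
  have hconj : Relation.EqvGen hurwitzStep (fun j => τ⁻¹ * F j * τ) (fun j => τ⁻¹ * x j * τ) :=
    eqvGen_conj τ hFx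
  exact Relation.EqvGen.trans _ _ _ hconj
    (Relation.EqvGen.trans _ _ _ (Relation.EqvGen.symm _ _ hyz)
      (Relation.EqvGen.trans _ _ _ (Relation.EqvGen.symm _ _ hxy)
        (Relation.EqvGen.symm _ _ hFx)))
end

section
/- Let Λ = ℤ + iℤ ⊂ ℂ be the lattice of Gaussian integers, let r ∈ {0,1,2,3}, and let μ = a + ib ∈ ℂ with a, b ∈ ℝ. The map σ : ℂ/Λ → ℂ/Λ induced by z ↦ iʳ·z̄ + μ is a well-defined map on the quotient and satisfies σ ∘ σ = id if and only if iʳ·μ̄ + μ ∈ Λ, which holds if and only if: (r = 0 and 2a ∈ ℤ), or (r = 1 and a + b ∈ ℤ), or (r = 2 and 2b ∈ ℤ), or (r = 3 and a − b ∈ ℤ). -/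
/-- The lattice `ℤ + iℤ ⊂ ℂ` of Gaussian integers. -/
noncomputable def gaussianLattice : AddSubgroup ℂ :=
  AddSubgroup.closure ({1, Complex.I} : Set ℂ)

lemma mem_gauss (z : ℂ) : z ∈ gaussianLattice ↔
    (∃ m : ℤ, z.re = m) ∧ (∃ n : ℤ, z.im = n) := by
  constructor
  · intro hz
    induction hz using AddSubgroup.closure_induction with
    | mem x hx =>
      rcases hx with h | h <;> subst h
      · exact ⟨⟨1, by norm_num⟩, ⟨0, by norm_num⟩⟩
      · exact ⟨⟨0, by norm_num⟩, ⟨1, by norm_num⟩⟩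
    | zero => exact ⟨⟨0, by simp⟩, ⟨0, by simp⟩⟩
    | add x y _ _ hx hy =>
      obtain ⟨⟨m1, h1⟩, ⟨n1, h2⟩⟩ := hx
      obtain ⟨⟨m2, h3⟩, ⟨n2, h4⟩⟩ := hy
      exact ⟨⟨m1 + m2, by simp [h1, h3]⟩, ⟨n1 + n2, by simp [h2, h4]⟩⟩
    | neg x _ hx =>
      obtain ⟨⟨m, h1⟩, ⟨n, h2⟩⟩ := hx
      exact ⟨⟨-m, by simp [h1]⟩, ⟨-n, by simp [h2]⟩⟩
  · rintro ⟨⟨m, hm⟩, ⟨n, hn⟩⟩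
    have hz : z = (m : ℂ) + (n : ℂ) * Complex.I := by
      apply Complex.ext <;> simp [hm, hn]
    rw [hz]
    have h1 : (1 : ℂ) ∈ gaussianLattice := AddSubgroup.subset_closure (by simp)
    have h2 : Complex.I ∈ gaussianLattice := AddSubgroup.subset_closure (by simp)
    have := AddSubgroup.add_mem gaussianLattice (AddSubgroup.zsmul_mem _ h1 m)
      (AddSubgroup.zsmul_mem _ h2 n)
    simpa using this

lemma I_mul_mem {u : ℂ} (h : u ∈ gaussianLattice) : Complex.I * u ∈ gaussianLattice := by
  rw [mem_gauss] at h ⊢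
  obtain ⟨⟨m, hm⟩, ⟨n, hn⟩⟩ := h
  exact ⟨⟨-n, by simp [Complex.mul_re, hn]⟩, ⟨m, by simp [Complex.mul_im, hm]⟩⟩

lemma I_pow_mul_mem (r : ℕ) {u : ℂ} (h : u ∈ gaussianLattice) :
    Complex.I ^ r * u ∈ gaussianLattice := by
  induction r generalizing u with
  | zero => simpa using h
  | succ k ih =>
    have h2 := ih (I_mul_mem h)
    have he : Complex.I ^ (k + 1) * u = Complex.I ^ k * (Complex.I * u) := by ring
    rw [he]; exact h2

lemma conj_mem {u : ℂ} (h : u ∈ gaussianLattice) :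
    (starRingEnd ℂ) u ∈ gaussianLattice := by
  rw [mem_gauss] at h ⊢
  obtain ⟨⟨m, hm⟩, ⟨n, hn⟩⟩ := h
  exact ⟨⟨m, by simpa using hm⟩, ⟨-n, by simp [hn]⟩⟩

/-- Real structures on the anharmonic elliptic curve `ℂ/(ℤ ⊕ iℤ)`: the map
`z ↦ iʳ z̄ + μ` descends to the quotient, and squares to the identity on the quotient
iff `iʳ μ̄ + μ ∈ Λ`, which for `μ = a + ib` holds iff `2a ∈ ℤ` (r=0), `a+b ∈ ℤ` (r=1),
`2b ∈ ℤ` (r=2), or `a-b ∈ ℤ` (r=3). -/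
theorem stmt_17 (r : ℕ) (hr : r < 4) (a b : ℝ) (μ : ℂ)
    (hμ : μ = (a : ℂ) + (b : ℂ) * Complex.I)
    (f : ℂ → ℂ) (hf : ∀ z, f z = Complex.I ^ r * (starRingEnd ℂ) z + μ) :
    (∀ z w : ℂ, z - w ∈ gaussianLattice → f z - f w ∈ gaussianLattice) ∧
    ((∀ z : ℂ, (QuotientAddGroup.mk (f (f z)) : ℂ ⧸ gaussianLattice) =
        QuotientAddGroup.mk z) ↔
      Complex.I ^ r * (starRingEnd ℂ) μ + μ ∈ gaussianLattice) ∧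
    (Complex.I ^ r * (starRingEnd ℂ) μ + μ ∈ gaussianLattice ↔
      ((r = 0 ∧ ∃ k : ℤ, 2 * a = (k : ℝ)) ∨ (r = 1 ∧ ∃ k : ℤ, a + b = (k : ℝ)) ∨
       (r = 2 ∧ ∃ k : ℤ, 2 * b = (k : ℝ)) ∨ (r = 3 ∧ ∃ k : ℤ, a - b = (k : ℝ)))) := by
  set c : ℂ := Complex.I ^ r * (starRingEnd ℂ) μ + μ with hc
  refine ⟨?_, ?_, ?_⟩
  · intro z w hzw
    have : f z - f w = Complex.I ^ r * (starRingEnd ℂ) (z - w) := by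
      rw [hf, hf, map_sub]; ring
    rw [this]
    exact I_pow_mul_mem r (conj_mem hzw)
  · have hffz : ∀ z : ℂ, f (f z) = z + c := by
      intro z
      have key : Complex.I ^ r * ((starRingEnd ℂ) Complex.I) ^ r = 1 := by
        rw [Complex.conj_I, ← mul_pow]
        simp [Complex.I_mul_I]
      rw [hf, hf, map_add, map_mul, map_pow, hc]
      rw [Complex.conj_conj]
      calc Complex.I ^ r * (((starRingEnd ℂ) Complex.I) ^ r * z
            + (starRingEnd ℂ) μ) + μ
          = (Complex.I ^ r * ((starRingEnd ℂ) Complex.I) ^ r) * z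
            + (Complex.I ^ r * (starRingEnd ℂ) μ + μ) := by ring
        _ = z + (Complex.I ^ r * (starRingEnd ℂ) μ + μ) := by rw [key, one_mul]
    constructor
    · intro h
      have h0 := h 0
      rw [hffz 0, zero_add, QuotientAddGroup.eq] at h0
      simpa using neg_mem_iff.mp (by simpa using h0)
    · intro h z
      rw [hffz z, QuotientAddGroup.eq]
      have : -(z + c) + z = -c := by ring
      rw [this]
      exact neg_mem h
  · interval_cases r
    · have hval : c = ((2 * a : ℝ) : ℂ) := by
        rw [hc, hμ]; apply Complex.ext <;> simp [pow_succ, Complex.mul_re, Complex.mul_im] <;> ring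
      rw [hval, mem_gauss]
      constructor
      · rintro ⟨⟨m, hm⟩, -⟩
        exact Or.inl ⟨rfl, m, by simpa using hm⟩
      · rintro (⟨-, m, hm⟩ | ⟨h, -⟩ | ⟨h, -⟩ | ⟨h, -⟩) <;> try omega
        exact ⟨⟨m, by simpa using hm⟩, ⟨0, by simp⟩⟩
    · have hval : c = ((a + b : ℝ) : ℂ) * (1 + Complex.I) := by
        rw [hc, hμ]; apply Complex.ext <;> simp [pow_succ, Complex.mul_re, Complex.mul_im] <;> ring
      rw [hval, mem_gauss]
      constructor
      · rintro ⟨⟨m, hm⟩, -⟩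
        refine Or.inr (Or.inl ⟨rfl, m, ?_⟩)
        simpa [Complex.mul_re] using hm
      · rintro (⟨h, -⟩ | ⟨-, m, hm⟩ | ⟨h, -⟩ | ⟨h, -⟩) <;> try omega
        exact ⟨⟨m, by simpa [Complex.mul_re] using hm⟩,
          ⟨m, by simpa [Complex.mul_im] using hm⟩⟩
    · have hval : c = ((2 * b : ℝ) : ℂ) * Complex.I := by
        rw [hc, hμ]; apply Complex.ext <;> simp [pow_succ, Complex.mul_re, Complex.mul_im] <;> ring
      rw [hval, mem_gauss]
      constructor
      · rintro ⟨-, ⟨n, hn⟩⟩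
        refine Or.inr (Or.inr (Or.inl ⟨rfl, n, ?_⟩))
        simpa [Complex.mul_im] using hn
      · rintro (⟨h, -⟩ | ⟨h, -⟩ | ⟨-, n, hn⟩ | ⟨h, -⟩) <;> try omega
        exact ⟨⟨0, by simp [Complex.mul_re]⟩, ⟨n, by simpa [Complex.mul_im] using hn⟩⟩
    · have hval : c = ((a - b : ℝ) : ℂ) * (1 - Complex.I) := by
        rw [hc, hμ]; apply Complex.ext <;> simp [pow_succ, Complex.mul_re, Complex.mul_im] <;> ring
      rw [hval, mem_gauss]
      constructor
      · rintro ⟨⟨m, hm⟩, -⟩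
        refine Or.inr (Or.inr (Or.inr ⟨rfl, m, ?_⟩))
        simpa [Complex.mul_re] using hm
      · rintro (⟨h, -⟩ | ⟨h, -⟩ | ⟨h, -⟩ | ⟨-, m, hm⟩) <;> try omega
        exact ⟨⟨m, by simpa [Complex.mul_re] using hm⟩,
          ⟨-m, by simp [Complex.mul_im]; linarith [hm]⟩⟩
end

section
/- Let G be a finite abelian group admitting an unmixed Beauville structure, i.e., two pairs (a, c) and (a', c') each generating G, such that, setting Σ(x, y) := ⋃_{g ∈ G, i ∈ ℤ} {g xⁱ g⁻¹, g yⁱ g⁻¹, g (xy)ⁱ g⁻¹} (which for abelian G is just the union of the cyclic subgroups generated by x, y and xy), one has Σ(a, c) ∩ Σ(a', c') = {1}. Then G is isomorphic to (ℤ/nℤ) × (ℤ/nℤ) for some integer n with gcd(n, 6) = 1. -/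
open Subgroup

/-- In a cyclic group of prime order, any nontrivial element generates. -/
lemma bv_gen_of_mem {G : Type*} [Group G] {p : ℕ} (hp : p.Prime) {w x : G}
    (hw : orderOf w = p) (hx : x ∈ Subgroup.zpowers w) (hx1 : x ≠ 1) :
    w ∈ Subgroup.zpowers x := by
  obtain ⟨k, rfl⟩ := Subgroup.mem_zpowers_iff.mp hx
  have hk : ¬ (p : ℤ) ∣ k := by
    intro hdvd
    exact hx1 (orderOf_dvd_iff_zpow_eq_one.mp (hw ▸ hdvd))
  have hgp : Int.gcd k p ∣ p := by
    have := @Int.gcd_dvd_right k (p:ℤ)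
    exact Int.ofNat_dvd.mp (by simpa using this)
  have hg : Int.gcd k p = 1 := by
    rcases (Nat.dvd_prime hp).mp hgp with h1 | h1
    · exact h1
    · exact absurd (h1 ▸ @Int.gcd_dvd_left k (p:ℤ)) hk
  obtain ⟨α, β, hab⟩ := Int.isCoprime_iff_gcd_eq_one.mpr hg
  refine Subgroup.mem_zpowers_iff.mpr ⟨α, ?_⟩
  have hwp : w ^ (p : ℤ) = 1 := by
    rw [zpow_natCast, ← hw, pow_orderOf_eq_one]
  calc (w ^ k) ^ α = w ^ (α * k) * (w ^ (p:ℤ)) ^ β := by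
        rw [hwp, one_zpow, mul_one, ← zpow_mul, mul_comm k α]
    _ = w ^ (α * k + β * p) := by rw [← zpow_mul, mul_comm (p:ℤ) β, ← zpow_add]
    _ = w := by rw [hab, zpow_one]

/-- If `x^p = 1`, `x^j = 1` and `p ∤ j` then `x = 1`. -/
lemma bv_eq_one {G : Type*} [Group G] {p : ℕ} (hp : p.Prime) {x : G} (hxp : x ^ p = 1)
    {j : ℤ} (hj : ¬ (p : ℤ) ∣ j) (hxj : x ^ j = 1) : x = 1 := by
  by_contra hx1
  have hord : orderOf x = p := by
    haveI : Fact p.Prime := ⟨hp⟩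
    exact orderOf_eq_prime hxp hx1
  exact hj (by rw [← hord]; exact orderOf_dvd_iff_zpow_eq_one.mpr hxj)

/-- Cyclic case: if both generating pairs lie in a common cyclic group of order p,
we find the generator in both Sigma sets. -/
lemma bv_S1 {G : Type*} [CommGroup G] {p : ℕ} (hp : p.Prime) {u' v' w : G}
    (hw1 : w ≠ 1) (hwp : w ^ p = 1) (hnt' : ¬(u' = 1 ∧ v' = 1))
    (hle : Subgroup.closure ({u', v'} : Set G) ≤ Subgroup.zpowers w) :
    w ∈ Subgroup.zpowers u' ∨ w ∈ Subgroup.zpowers v' ∨ w ∈ Subgroup.zpowers (u' * v') := by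
  have hord : orderOf w = p := by
    haveI : Fact p.Prime := ⟨hp⟩
    exact orderOf_eq_prime hwp hw1
  have hu' : u' ∈ Subgroup.zpowers w :=
    hle (Subgroup.subset_closure (Set.mem_insert _ _))
  have hv' : v' ∈ Subgroup.zpowers w :=
    hle (Subgroup.subset_closure (Set.mem_insert_of_mem _ rfl))
  by_cases h1 : u' = 1
  · have h2 : v' ≠ 1 := fun h2 => hnt' ⟨h1, h2⟩
    exact Or.inr (Or.inl (bv_gen_of_mem hp hord hv' h2))
  · exact Or.inl (bv_gen_of_mem hp hord hu' h1)

/-- Independence of the pair (u,v). -/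
lemma bv_indep {G : Type*} [CommGroup G] {p : ℕ} (hp : p.Prime) {u v u' v' : G}
    (hu : u ^ p = 1) (hv : v ^ p = 1)
    (hnt : ¬(u = 1 ∧ v = 1)) (hnt' : ¬(u' = 1 ∧ v' = 1))
    (hW : Subgroup.closure ({u, v} : Set G) = Subgroup.closure ({u', v'} : Set G))
    (hdisj : ∀ x : G,
      (x ∈ Subgroup.zpowers u ∨ x ∈ Subgroup.zpowers v ∨ x ∈ Subgroup.zpowers (u * v)) →
      (x ∈ Subgroup.zpowers u' ∨ x ∈ Subgroup.zpowers v' ∨ x ∈ Subgroup.zpowers (u' * v')) →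
      x = 1)
    {i j : ℤ} (h : u ^ i * v ^ j = 1) : (p : ℤ) ∣ i ∧ (p : ℤ) ∣ j := by
  -- main contradiction machine: closure {u,v} is cyclic generated by w ∈ {u,v}
  have key : ∀ w : G, w ≠ 1 → w ^ p = 1 →
      (w ∈ Subgroup.zpowers u ∨ w ∈ Subgroup.zpowers v) →
      Subgroup.closure ({u, v} : Set G) ≤ Subgroup.zpowers w → False := by
    intro w hw1 hwp hmem hlew
    have := bv_S1 hp hw1 hwp hnt' (hW ▸ hlew)
    exact hw1 (hdisj w (by tauto) this)
  have hiu : (p:ℤ) ∣ i → u ^ i = 1 := by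
    rintro ⟨t, rfl⟩
    rw [zpow_mul, zpow_natCast, hu, one_zpow]
  have hjv : (p:ℤ) ∣ j → v ^ j = 1 := by
    rintro ⟨t, rfl⟩
    rw [zpow_mul, zpow_natCast, hv, one_zpow]
  by_cases hi : (p:ℤ) ∣ i <;> by_cases hj : (p:ℤ) ∣ j
  · exact ⟨hi, hj⟩
  · -- v^j = 1 with p ∤ j ⇒ v = 1, then closure = ⟨u⟩
    exfalso
    have hvj : v ^ j = 1 := by
      have := hiu hi
      rwa [this, one_mul] at h
    have hv1 : v = 1 := bv_eq_one hp hv hj hvj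
    have hu1 : u ≠ 1 := fun h' => hnt ⟨h', hv1⟩
    refine key u hu1 hu (Or.inl (Subgroup.mem_zpowers u)) ?_
    rw [Subgroup.closure_le]
    refine Set.insert_subset_iff.mpr ⟨Subgroup.mem_zpowers u, Set.singleton_subset_iff.mpr ?_⟩
    rw [hv1]; exact Subgroup.one_mem _
  · exfalso
    have huj : u ^ i = 1 := by
      have := hjv hj
      rwa [this, mul_one] at h
    have hu1 : u = 1 := bv_eq_one hp hu hi huj
    have hv1 : v ≠ 1 := fun h' => hnt ⟨hu1, h'⟩
    refine key v hv1 hv (Or.inr (Subgroup.mem_zpowers v)) ?_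
    rw [Subgroup.closure_le]
    refine Set.insert_subset_iff.mpr ⟨?_, Set.singleton_subset_iff.mpr (Subgroup.mem_zpowers v)⟩
    rw [hu1]; exact Subgroup.one_mem _
  · -- p ∤ i and p ∤ j
    exfalso
    have hu1 : u ≠ 1 := by
      rintro rfl
      rw [one_zpow, one_mul] at h
      exact hnt ⟨rfl, bv_eq_one hp hv hj h⟩
    have hordu : orderOf u = p := by
      haveI : Fact p.Prime := ⟨hp⟩
      exact orderOf_eq_prime hu hu1
    have hvj : v ^ j = u ^ (-i) := by
      rw [zpow_neg, eq_inv_iff_mul_eq_one, mul_comm]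
      exact h
    have hv1 : v ≠ 1 := by
      rintro rfl
      rw [one_zpow, mul_one] at h
      exact hu1 (bv_eq_one hp hu hi h)
    have hordv : orderOf v = p := by
      haveI : Fact p.Prime := ⟨hp⟩
      exact orderOf_eq_prime hv hv1
    have hvj1 : v ^ j ≠ 1 := fun h' => hv1 (bv_eq_one hp hv hj h')
    have hvmem : v ∈ Subgroup.zpowers u := by
      have h1 : v ∈ Subgroup.zpowers (v ^ j) :=
        bv_gen_of_mem hp hordv (Subgroup.zpow_mem (Subgroup.zpowers v) (Subgroup.mem_zpowers v) j) hvj1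
      have h2 : Subgroup.zpowers (v ^ j) ≤ Subgroup.zpowers u := by
        rw [Subgroup.zpowers_le, hvj]
        exact Subgroup.zpow_mem _ (Subgroup.mem_zpowers u) _
      exact h2 h1
    refine key u hu1 hu (Or.inl (Subgroup.mem_zpowers u)) ?_
    rw [Subgroup.closure_le]
    exact Set.insert_subset_iff.mpr ⟨Subgroup.mem_zpowers u, Set.singleton_subset_iff.mpr hvmem⟩

lemma bv_red {G : Type*} [Group G] {p : ℕ} {x : G} (hx : x ^ p = 1) (i : ℤ) :
    x ^ i = x ^ (i % (p : ℤ)) := by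
  conv_lhs => rw [← Int.mul_ediv_add_emod i (p : ℤ)]
  rw [zpow_add, zpow_mul, zpow_natCast, hx, one_zpow, one_mul]

lemma bv_ne_one' {G : Type*} [Group G] {p : ℕ} (hp : p.Prime) {u' v' : G}
    (ind' : ∀ i j : ℤ, u' ^ i * v' ^ j = 1 → (p : ℤ) ∣ i ∧ (p : ℤ) ∣ j) :
    u' ≠ 1 ∧ v' ≠ 1 := by
  constructor
  · intro h1
    have := (ind' 1 0 (by rw [h1, one_zpow, zpow_zero, one_mul])).1
    have h2 := Int.le_of_dvd one_pos this
    have h3 := hp.two_le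
    omega
  · intro h1
    have := (ind' 0 1 (by rw [h1, one_zpow, zpow_zero, one_mul])).2
    have h2 := Int.le_of_dvd one_pos this
    have h3 := hp.two_le
    omega

lemma bv_no2 {G : Type*} [CommGroup G] {u v u' v' : G}
    (hu : u ^ 2 = 1) (hv : v ^ 2 = 1)
    (hW : Subgroup.closure ({u, v} : Set G) = Subgroup.closure ({u', v'} : Set G))
    (hdisj : ∀ x : G,
      (x ∈ Subgroup.zpowers u ∨ x ∈ Subgroup.zpowers v ∨ x ∈ Subgroup.zpowers (u * v)) →
      (x ∈ Subgroup.zpowers u' ∨ x ∈ Subgroup.zpowers v' ∨ x ∈ Subgroup.zpowers (u' * v')) →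
      x = 1)
    (ind' : ∀ i j : ℤ, u' ^ i * v' ^ j = 1 → (2 : ℤ) ∣ i ∧ (2 : ℤ) ∣ j) : False := by
  have hne := bv_ne_one' Nat.prime_two ind'
  have hmem : u' ∈ Subgroup.closure ({u, v} : Set G) := by
    rw [hW]; exact Subgroup.subset_closure (Set.mem_insert _ _)
  obtain ⟨i, j, hij⟩ := Subgroup.mem_closure_pair.mp hmem
  have hx2 : u' = u ^ (i % (2:ℤ)) * v ^ (j % (2:ℤ)) := by
    have e1 := bv_red hu i
    have e2 := bv_red hv j
    push_cast at e1 e2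
    rw [e1, e2] at hij
    exact hij.symm
  have hsig : u' ∈ Subgroup.zpowers u' ∨ u' ∈ Subgroup.zpowers v' ∨
      u' ∈ Subgroup.zpowers (u' * v') := Or.inl (Subgroup.mem_zpowers u')
  have hi : i % 2 = 0 ∨ i % 2 = 1 := Int.emod_two_eq_zero_or_one i
  have hj : j % 2 = 0 ∨ j % 2 = 1 := Int.emod_two_eq_zero_or_one j
  rcases hi with hi | hi <;> rcases hj with hj | hj <;>
    rw [hi, hj] at hx2 <;>
    simp only [zpow_zero, zpow_one, one_mul, mul_one] at hx2
  · exact hne.1 hx2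
  · exact hne.1 (hdisj u' (Or.inr (Or.inl (hx2 ▸ Subgroup.mem_zpowers v))) hsig)
  · exact hne.1 (hdisj u' (Or.inl (hx2 ▸ Subgroup.mem_zpowers u)) hsig)
  · exact hne.1 (hdisj u' (Or.inr (Or.inr (hx2 ▸ Subgroup.mem_zpowers (u*v)))) hsig)

lemma bv_no3 {G : Type*} [CommGroup G] {u v u' v' : G}
    (hu : u ^ 3 = 1) (hv : v ^ 3 = 1)
    (hW : Subgroup.closure ({u, v} : Set G) = Subgroup.closure ({u', v'} : Set G))
    (hdisj : ∀ x : G,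
      (x ∈ Subgroup.zpowers u ∨ x ∈ Subgroup.zpowers v ∨ x ∈ Subgroup.zpowers (u * v)) →
      (x ∈ Subgroup.zpowers u' ∨ x ∈ Subgroup.zpowers v' ∨ x ∈ Subgroup.zpowers (u' * v')) →
      x = 1)
    (ind : ∀ i j : ℤ, u ^ i * v ^ j = 1 → (3 : ℤ) ∣ i ∧ (3 : ℤ) ∣ j)
    (ind' : ∀ i j : ℤ, u' ^ i * v' ^ j = 1 → (3 : ℤ) ∣ i ∧ (3 : ℤ) ∣ j) : False := by
  have hne := bv_ne_one' Nat.prime_three ind'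
  -- every nontrivial element of closure {u,v} that lies in the primed Sigma set
  -- lies in the cyclic group generated by u * v^2
  have claim : ∀ x : G, x ∈ Subgroup.closure ({u, v} : Set G) → x ≠ 1 →
      (x ∈ Subgroup.zpowers u' ∨ x ∈ Subgroup.zpowers v' ∨ x ∈ Subgroup.zpowers (u' * v')) →
      x ∈ Subgroup.zpowers (u * v ^ 2) := by
    intro x hmem hx1 hsig
    obtain ⟨i, j, hij⟩ := Subgroup.mem_closure_pair.mp hmem
    have hx2 : x = u ^ (i % (3:ℤ)) * v ^ (j % (3:ℤ)) := by
      have e1 := bv_red hu i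
      have e2 := bv_red hv j
      push_cast at e1 e2
      rw [e1, e2] at hij
      exact hij.symm
    have hsq : (u * v ^ 2) ^ 2 = u ^ 2 * v := by
      calc (u * v ^ 2) ^ 2 = u ^ 2 * v ^ 4 := by rw [mul_pow, ← pow_mul]
        _ = u ^ 2 * (v ^ 3 * v) := by rw [← pow_succ]
        _ = u ^ 2 * v := by rw [hv, one_mul]
    have hz2 : ∀ y : G, y ^ (2:ℤ) = y ^ (2:ℕ) := fun y => by
      rw [← zpow_natCast]; norm_num
    have hi : i % 3 = 0 ∨ i % 3 = 1 ∨ i % 3 = 2 := by omega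
    have hj : j % 3 = 0 ∨ j % 3 = 1 ∨ j % 3 = 2 := by omega
    rcases hi with hi | hi | hi <;> rcases hj with hj | hj | hj <;>
      rw [hi, hj] at hx2 <;>
      simp only [zpow_zero, zpow_one, one_mul, mul_one, hz2] at hx2
    all_goals try exact absurd hx2 hx1
    -- (0,1): x = v
    · exact absurd (hdisj x (Or.inr (Or.inl (hx2 ▸ Subgroup.mem_zpowers v))) hsig) hx1
    · exact absurd (hdisj x (Or.inr (Or.inl (hx2 ▸ Subgroup.pow_mem _ (Subgroup.mem_zpowers v) 2))) hsig) hx1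
    · exact absurd (hdisj x (Or.inl (hx2 ▸ Subgroup.mem_zpowers u)) hsig) hx1
    · exact absurd (hdisj x (Or.inr (Or.inr (hx2 ▸ Subgroup.mem_zpowers (u * v)))) hsig) hx1
    · -- (1,2) : x = u * v^2
      exact hx2 ▸ Subgroup.mem_zpowers _
    · exact absurd (hdisj x (Or.inl (hx2 ▸ Subgroup.pow_mem _ (Subgroup.mem_zpowers u) 2)) hsig) hx1
    · -- (2,1) : x = u^2 * v = (u * v^2)^2
      refine hx2 ▸ ?_
      rw [← hsq]
      exact Subgroup.pow_mem _ (Subgroup.mem_zpowers _) 2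
    · -- (2,2) : x = (u*v)^2
      have : x = (u * v) ^ 2 := by rw [hx2, mul_pow]
      exact absurd (hdisj x (Or.inr (Or.inr (this ▸ Subgroup.pow_mem _ (Subgroup.mem_zpowers (u*v)) 2))) hsig) hx1
  have hu'm : u' ∈ Subgroup.closure ({u, v} : Set G) := by
    rw [hW]; exact Subgroup.subset_closure (Set.mem_insert _ _)
  have hv'm : v' ∈ Subgroup.closure ({u, v} : Set G) := by
    rw [hW]; exact Subgroup.subset_closure (Set.mem_insert_of_mem _ rfl)
  have hu'L := claim u' hu'm hne.1 (Or.inl (Subgroup.mem_zpowers u'))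
  have hv'L := claim v' hv'm hne.2 (Or.inr (Or.inl (Subgroup.mem_zpowers v')))
  have hle : Subgroup.closure ({u', v'} : Set G) ≤ Subgroup.zpowers (u * v ^ 2) := by
    rw [Subgroup.closure_le]
    exact Set.insert_subset_iff.mpr ⟨hu'L, Set.singleton_subset_iff.mpr hv'L⟩
  have humem : u ∈ Subgroup.zpowers (u * v ^ 2) := by
    refine hle ?_
    rw [← hW]
    exact Subgroup.subset_closure (Set.mem_insert _ _)
  obtain ⟨m, hm⟩ := Subgroup.mem_zpowers_iff.mp humem
  have hv2 : (v ^ (2:ℕ)) ^ m = v ^ (2 * m) := by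
    rw [← zpow_natCast v 2, ← zpow_mul]
    norm_num
  have hm' : u ^ m * v ^ (2 * m) = u := by
    rw [← hv2, ← mul_zpow, hm]
  have key : u ^ ((1:ℤ) - m) * v ^ (-(2 * m)) = 1 := by
    rw [zpow_sub, zpow_one, zpow_neg]
    calc u * (u ^ m)⁻¹ * (v ^ (2*m))⁻¹ = u * (u ^ m * v ^ (2*m))⁻¹ := by
          rw [mul_inv, mul_assoc]
      _ = u * u⁻¹ := by rw [hm']
      _ = 1 := by group
  obtain ⟨d1, d2⟩ := ind _ _ key
  omega

lemma bv_mem_S {G : Type*} [CommGroup G] (a c : G) (S : G → G → Set G)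
    (hS : ∀ x y : G, S x y =
      {h : G | ∃ (g : G) (i : ℤ),
        h = g * x ^ i * g⁻¹ ∨ h = g * y ^ i * g⁻¹ ∨ h = g * (x * y) ^ i * g⁻¹})
    (m : ℕ) : ∀ x : G,
    (x ∈ Subgroup.zpowers (a ^ m) ∨ x ∈ Subgroup.zpowers (c ^ m) ∨
      x ∈ Subgroup.zpowers (a ^ m * c ^ m)) → x ∈ S a c := by
  intro x hx
  rw [hS]
  have hac : a ^ m * c ^ m = (a * c) ^ m := (mul_pow a c m).symm
  rcases hx with h | h | h
  · obtain ⟨k, rfl⟩ := Subgroup.mem_zpowers_iff.mp h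
    exact ⟨1, (m : ℤ) * k, Or.inl (by rw [← zpow_natCast a m, ← zpow_mul]; group)⟩
  · obtain ⟨k, rfl⟩ := Subgroup.mem_zpowers_iff.mp h
    exact ⟨1, (m : ℤ) * k, Or.inr (Or.inl (by rw [← zpow_natCast c m, ← zpow_mul]; group))⟩
  · rw [hac] at h
    obtain ⟨k, rfl⟩ := Subgroup.mem_zpowers_iff.mp h
    exact ⟨1, (m : ℤ) * k, Or.inr (Or.inr (by rw [← zpow_natCast (a*c) m, ← zpow_mul]; group))⟩

lemma bv_closure_pow {G : Type*} [CommGroup G] (a c : G)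
    (hgen : Subgroup.closure ({a, c} : Set G) = ⊤) (m : ℕ) :
    Subgroup.closure ({a ^ m, c ^ m} : Set G) = (powMonoidHom m : G →* G).range := by
  rw [MonoidHom.range_eq_map, ← hgen, MonoidHom.map_closure]
  congr 1
  rw [Set.image_insert_eq, Set.image_singleton]
  rfl

lemma bv_nt {G : Type*} [CommGroup G] [Finite G] (a c : G)
    (hgen : Subgroup.closure ({a, c} : Set G) = ⊤) {p : ℕ} (hp : p.Prime)
    (hpn : p ∣ Monoid.exponent G) :
    ¬(a ^ (Monoid.exponent G / p) = 1 ∧ c ^ (Monoid.exponent G / p) = 1) := by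
  rintro ⟨h1, h2⟩
  set n := Monoid.exponent G with hn
  have hn0 : n ≠ 0 := Monoid.exponent_ne_zero_of_finite
  have hall : ∀ g : G, g ^ (n / p) = 1 := by
    intro g
    have hg : g ∈ Subgroup.closure ({a, c} : Set G) := by rw [hgen]; trivial
    induction hg using Subgroup.closure_induction with
    | mem x hx => rcases hx with rfl | rfl <;> assumption
    | one => exact one_pow _
    | mul x y _ _ hx hy => rw [mul_pow, hx, hy, one_mul]
    | inv x _ hx => rw [inv_pow, hx, inv_one]
  have hdvd : n ∣ n / p := Monoid.exponent_dvd_of_forall_pow_eq_one hall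
  have hlt : n / p < n := Nat.div_lt_self (Nat.pos_of_ne_zero hn0) hp.one_lt
  have hpos : 0 < n / p := Nat.div_pos (Nat.le_of_dvd (Nat.pos_of_ne_zero hn0) hpn) hp.pos
  exact absurd (Nat.le_of_dvd hpos hdvd) (by omega)

lemma bv_hdisj {G : Type*} [CommGroup G] (a c a' c' : G) (S : G → G → Set G)
    (hS : ∀ x y : G, S x y =
      {h : G | ∃ (g : G) (i : ℤ),
        h = g * x ^ i * g⁻¹ ∨ h = g * y ^ i * g⁻¹ ∨ h = g * (x * y) ^ i * g⁻¹})
    (hfree : S a c ∩ S a' c' = {1}) (m : ℕ) :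
    ∀ x : G,
      (x ∈ Subgroup.zpowers (a ^ m) ∨ x ∈ Subgroup.zpowers (c ^ m) ∨
        x ∈ Subgroup.zpowers (a ^ m * c ^ m)) →
      (x ∈ Subgroup.zpowers (a' ^ m) ∨ x ∈ Subgroup.zpowers (c' ^ m) ∨
        x ∈ Subgroup.zpowers (a' ^ m * c' ^ m)) → x = 1 := by
  intro x h1 h2
  have hx : x ∈ S a c ∩ S a' c' :=
    ⟨bv_mem_S a c S hS m x h1, bv_mem_S a' c' S hS m x h2⟩
  rw [hfree] at hx
  exact hx

lemma bv_ind {G : Type*} [CommGroup G] [Finite G] (a c a' c' : G) (S : G → G → Set G)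
    (hS : ∀ x y : G, S x y =
      {h : G | ∃ (g : G) (i : ℤ),
        h = g * x ^ i * g⁻¹ ∨ h = g * y ^ i * g⁻¹ ∨ h = g * (x * y) ^ i * g⁻¹})
    (hgen : Subgroup.closure ({a, c} : Set G) = ⊤)
    (hgen' : Subgroup.closure ({a', c'} : Set G) = ⊤)
    (hfree : S a c ∩ S a' c' = {1})
    {p : ℕ} (hp : p.Prime) (hpn : p ∣ Monoid.exponent G) :
    ∀ i j : ℤ, (a ^ (Monoid.exponent G / p)) ^ i * (c ^ (Monoid.exponent G / p)) ^ j = 1 →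
      (p : ℤ) ∣ i ∧ (p : ℤ) ∣ j := by
  set n := Monoid.exponent G with hn
  set m := n / p with hm
  have hmp : m * p = n := Nat.div_mul_cancel hpn
  have hpow : ∀ g : G, (g ^ m) ^ p = 1 := fun g => by
    rw [← pow_mul, hmp]; exact Monoid.pow_exponent_eq_one g
  intro i j hij
  refine bv_indep hp (hpow a) (hpow c) (bv_nt a c hgen hp hpn) (bv_nt a' c' hgen' hp hpn)
    ((bv_closure_pow a c hgen m).trans (bv_closure_pow a' c' hgen' m).symm)
    (bv_hdisj a c a' c' S hS hfree m) hij

lemma bv_Z1 {n p : ℕ} (hn : n ≠ 0) (hpn : p ∣ n) (hp : 0 < p) {x : ZMod n}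
    (hx : p • x = 0) : ∃ s : ℕ, x = ((n / p * s : ℕ) : ZMod n) := by
  haveI : NeZero n := ⟨hn⟩
  obtain ⟨t, rfl⟩ := ZMod.natCast_zmod_surjective (n := n) x
  have h1 : ((p * t : ℕ) : ZMod n) = 0 := by
    push_cast
    rw [← nsmul_eq_mul]
    exact hx
  have h2 : n ∣ p * t := (ZMod.natCast_eq_zero_iff _ _).mp h1
  have h3 : (n / p) * p ∣ t * p := by
    rw [Nat.div_mul_cancel hpn, mul_comm t p]
    exact h2
  have h4 : n / p ∣ t := (mul_dvd_mul_iff_right (by omega : p ≠ 0)).mp h3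
  obtain ⟨s, rfl⟩ := h4
  exact ⟨s, rfl⟩


/-- A finite abelian group admitting an unmixed Beauville structure is isomorphic to
`(ℤ/n)²` with `gcd(n,6) = 1`. -/
theorem stmt_18 (G : Type*) [CommGroup G] [Finite G]
    (a c a' c' : G)
    (S : G → G → Set G)
    (hS : ∀ x y : G, S x y =
      {h : G | ∃ (g : G) (i : ℤ),
        h = g * x ^ i * g⁻¹ ∨ h = g * y ^ i * g⁻¹ ∨ h = g * (x * y) ^ i * g⁻¹})
    (hgen : Subgroup.closure ({a, c} : Set G) = ⊤)
    (hgen' : Subgroup.closure ({a', c'} : Set G) = ⊤)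
    (hfree : S a c ∩ S a' c' = {1}) :
    ∃ n : ℕ, Nat.gcd n 6 = 1 ∧
      Nonempty (G ≃* Multiplicative (ZMod n × ZMod n)) := by
  classical
  set n := Monoid.exponent G with hn
  have hn0 : n ≠ 0 := Monoid.exponent_ne_zero_of_finite
  haveI : NeZero n := ⟨hn0⟩
  have hfree' : S a' c' ∩ S a c = {1} := by rw [Set.inter_comm]; exact hfree
  have hnodvd : ∀ p : ℕ, p.Prime → p ∣ n → p ≠ 2 ∧ p ≠ 3 := by
    intro p hp hpn
    have ind := bv_ind a c a' c' S hS hgen hgen' hfree hp hpn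
    have ind' := bv_ind a' c' a c S hS hgen' hgen hfree' hp hpn
    have hW := (bv_closure_pow a c hgen (n/p)).trans (bv_closure_pow a' c' hgen' (n/p)).symm
    have hdisj := bv_hdisj a c a' c' S hS hfree (n/p)
    have hmp : (n/p) * p = n := Nat.div_mul_cancel hpn
    have hpow : ∀ g : G, (g ^ (n/p)) ^ p = 1 := fun g => by
      rw [← pow_mul, hmp]; exact Monoid.pow_exponent_eq_one g
    constructor
    · rintro rfl
      exact bv_no2 (hpow a) (hpow c) hW hdisj ind'
    · rintro rfl
      exact bv_no3 (hpow a) (hpow c) hW hdisj ind ind'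
  have hcop : Nat.gcd n 6 = 1 := by
    have h2 : ¬ (2 ∣ n) := fun h => (hnodvd 2 Nat.prime_two h).1 rfl
    have h3 : ¬ (3 ∣ n) := fun h => (hnodvd 3 Nat.prime_three h).2 rfl
    have c2 : Nat.Coprime n 2 := ((Nat.Prime.coprime_iff_not_dvd Nat.prime_two).mpr h2).symm
    have c3 : Nat.Coprime n 3 := ((Nat.Prime.coprime_iff_not_dvd Nat.prime_three).mpr h3).symm
    have : Nat.Coprime n (2 * 3) := Nat.Coprime.mul_right c2 c3
    simpa using this
  refine ⟨n, hcop, ?_⟩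
  -- construct the homomorphism (ZMod n)² → G, (i, j) ↦ aⁱ cʲ
  let fg : G → { φ : ℤ →+ Additive G // φ n = 0 } := fun g =>
    ⟨(zmultiplesHom (Additive G)) (Additive.ofMul g), by
      rw [zmultiplesHom_apply, ← ofMul_zpow, zpow_natCast, Monoid.pow_exponent_eq_one]; rfl⟩
  let χ : G → (ZMod n →+ Additive G) := fun g => ZMod.lift n (fg g)
  let F : ZMod n × ZMod n →+ Additive G := (χ a).coprod (χ c)
  let f : Multiplicative (ZMod n × ZMod n) →* G := AddMonoidHom.toMultiplicativeLeft F
  have hχ : ∀ (g : G) (s : ℕ), χ g ((s : ℕ) : ZMod n) = (s : ℤ) • Additive.ofMul g := by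
    intro g s
    have h1 : ((s : ℕ) : ZMod n) = ((s : ℤ) : ZMod n) := by push_cast; rfl
    rw [h1]
    exact ZMod.lift_coe n (fg g) (s : ℤ)
  have heval : ∀ s t : ℕ, f (Multiplicative.ofAdd ((s : ZMod n), (t : ZMod n))) = a ^ s * c ^ t := by
    intro s t
    show (F ((s : ZMod n), (t : ZMod n))).toMul = a ^ s * c ^ t
    rw [show F ((s : ZMod n), (t : ZMod n)) = χ a (s : ZMod n) + χ c (t : ZMod n) from rfl]
    rw [hχ a s, hχ c t, toMul_add, toMul_zsmul, toMul_zsmul]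
    rw [show (Additive.ofMul a).toMul = a from rfl, show (Additive.ofMul c).toMul = c from rfl]
    rw [zpow_natCast, zpow_natCast]
  have hsurj : Function.Surjective f := by
    have hle : Subgroup.closure ({a, c} : Set G) ≤ f.range := by
      rw [Subgroup.closure_le]
      refine Set.insert_subset_iff.mpr ⟨⟨Multiplicative.ofAdd ((1 : ZMod n), (0 : ZMod n)), ?_⟩,
        Set.singleton_subset_iff.mpr ⟨Multiplicative.ofAdd ((0 : ZMod n), (1 : ZMod n)), ?_⟩⟩
      · have := heval 1 0; simpa using this
      · have := heval 0 1; simpa using this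
    intro g
    have hg : g ∈ f.range := hle (by rw [hgen]; trivial)
    exact hg
  have hinj : Function.Injective f := by
    rw [injective_iff_map_eq_one]
    intro k hk
    by_contra hk1
    have hkz : Multiplicative.ofAdd (Multiplicative.toAdd k) = k := rfl
    set z : ZMod n × ZMod n := Multiplicative.toAdd k with hzdef
    have hnz : ∀ w : ZMod n × ZMod n, n • w = 0 := by
      intro w
      have h1 : (n • w).1 = 0 := by
        show (AddMonoidHom.fst (ZMod n) (ZMod n)) (n • w) = 0
        rw [(AddMonoidHom.fst (ZMod n) (ZMod n)).map_nsmul n w]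
        show n • w.1 = 0
        rw [nsmul_eq_mul, ZMod.natCast_self, zero_mul]
      have h2 : (n • w).2 = 0 := by
        show (AddMonoidHom.snd (ZMod n) (ZMod n)) (n • w) = 0
        rw [(AddMonoidHom.snd (ZMod n) (ZMod n)).map_nsmul n w]
        show n • w.2 = 0
        rw [nsmul_eq_mul, ZMod.natCast_self, zero_mul]
      exact Prod.ext h1 h2
    set d := addOrderOf z with hd
    have hdn : d ∣ n := addOrderOf_dvd_of_nsmul_eq_zero (hnz z)
    have hd1 : d ≠ 1 := by
      intro h1
      have hz0 : z = 0 := AddMonoid.addOrderOf_eq_one_iff.mp h1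
      exact hk1 (by rw [← hkz, hz0]; rfl)
    have hd0 : d ≠ 0 := fun h0 => hn0 (zero_dvd_iff.mp (h0 ▸ hdn))
    set p := d.minFac with hpdef
    have hp : p.Prime := Nat.minFac_prime hd1
    have hpd : p ∣ d := Nat.minFac_dvd d
    have hpn : p ∣ n := hpd.trans hdn
    set e := d / p with he
    have hep : e * p = d := Nat.div_mul_cancel hpd
    have he0 : 0 < e := Nat.div_pos (Nat.minFac_le (Nat.pos_of_ne_zero hd0)) hp.pos
    set z2 := e • z with hz2def
    have hz2ne : z2 ≠ 0 := by
      intro h0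
      have h1 : d ∣ e := addOrderOf_dvd_of_nsmul_eq_zero h0
      have h2 := Nat.le_of_dvd he0 h1
      have h3 : e < d := Nat.div_lt_self (Nat.pos_of_ne_zero hd0) hp.one_lt
      omega
    have hpz2 : p • z2 = 0 := by
      rw [hz2def, smul_smul, mul_comm p e, hep]
      exact addOrderOf_nsmul_eq_zero z
    have hpz1 : p • z2.1 = 0 := by
      show (AddMonoidHom.fst (ZMod n) (ZMod n)) (p • z2) = 0
      rw [hpz2]; rfl
    have hpz2' : p • z2.2 = 0 := by
      show (AddMonoidHom.snd (ZMod n) (ZMod n)) (p • z2) = 0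
      rw [hpz2]; rfl
    obtain ⟨s, hs⟩ := bv_Z1 hn0 hpn hp.pos hpz1
    obtain ⟨t, ht⟩ := bv_Z1 hn0 hpn hp.pos hpz2'
    have hke : k ^ e = Multiplicative.ofAdd z2 := by
      rw [hz2def, ofAdd_nsmul, hkz]
    have hfke : f (k ^ e) = 1 := by rw [map_pow, hk, one_pow]
    have heq : a ^ (n / p * s) * c ^ (n / p * t) = 1 := by
      rw [← heval (n / p * s) (n / p * t)]
      rw [show ((((n / p * s : ℕ) : ZMod n), ((n / p * t : ℕ) : ZMod n)) : ZMod n × ZMod n)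
            = z2 from (Prod.ext hs.symm ht.symm), ← hke]
      exact hfke
    have ind := bv_ind a c a' c' S hS hgen hgen' hfree hp hpn
    have hst : (p : ℤ) ∣ (s : ℤ) ∧ (p : ℤ) ∣ (t : ℤ) := by
      apply ind (s : ℤ) (t : ℤ)
      rw [zpow_natCast, zpow_natCast, ← pow_mul, ← pow_mul]
      exact heq
    have hps : p ∣ s := by exact_mod_cast hst.1
    have hpt : p ∣ t := by exact_mod_cast hst.2
    have hz1 : z2.1 = 0 := by
      obtain ⟨s0, rfl⟩ := hps
      rw [hs, show n / p * (p * s0) = n * s0 by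
        rw [← mul_assoc, Nat.div_mul_cancel hpn]]
      push_cast [ZMod.natCast_self]
      ring
    have hz2' : z2.2 = 0 := by
      obtain ⟨t0, rfl⟩ := hpt
      rw [ht, show n / p * (p * t0) = n * t0 by
        rw [← mul_assoc, Nat.div_mul_cancel hpn]]
      push_cast [ZMod.natCast_self]
      ring
    exact hz2ne (Prod.ext hz1 hz2')
  exact ⟨(MulEquiv.ofBijective f ⟨hinj, hsurj⟩).symm⟩
end
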